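/- arXiv:1711.02880 — 2 statements merged into one kernel-verified Lean document; each statement's English description precedes it below -/
import Mathlib

section
/- Suppose G(λ) < ∞. Then the probability that the system is empty satisfies ψ = (M(K) − Λ(I)) / (∑_{k∈K} μ_k / ψ_{|−k}); equivalently, ∑_{k∈K} μ_k · G(λ_{|−k}) = (M(K) − Λ(I)) · G(λ). (Note G(λ_{|−k}) ≤ G(λ) < ∞, so all quantities are well defined.) -/
/-!
In every state `x` split the total capacity `M(K)` into the rate `M(busy x)` of the servers
that have a job of an assigned class present and the rate of the idle ones. Summing the busy
part against the weight `Φ(x) λ^x`, the balance equation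
`Φ(x) M(busy x) = ∑_{i : x_i > 0} Φ(x - e_i)` and the shift `x ↦ x - e_i` give `Λ(I) G(λ)`.
The weight `Φ(x) λ_{|-k}^x` equals `Φ(x) λ^x` when `k` is idle in `x` and vanishes otherwise,
so the idle part sums to `∑_k μ_k G(λ_{|-k})`. Hence `M(K) G(λ) = Λ(I) G(λ) + ∑_k μ_k G(λ_{|-k})`.
-/

open scoped BigOperators

/-- The balance function of balanced fairness: `Φ(0) = 1` and
`Φ(x) = (∑_{i : x_i > 0} Φ(x - e_i)) / M(⋃_{i : x_i > 0} 𝒦_i)`. -/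
noncomputable def Phi {I K : Type} [Fintype I] [DecidableEq I] [DecidableEq K]
    (μ : K → ℝ) (Ka : I → Finset K) (x : I → ℕ) : ℝ :=
  if x = fun _ => 0 then 1
  else (∑ i ∈ (Finset.univ.filter (fun i => 0 < x i)).attach,
      Phi μ Ka (Function.update x i.1 (x i.1 - 1))) /
    (∑ k ∈ (Finset.univ.filter (fun i => 0 < x i)).biUnion Ka, μ k)
termination_by ∑ i, x i
decreasing_by
  have hi := i.2
  simp only [Finset.mem_filter] at hi
  apply Finset.sum_lt_sum
  · intro j _
    rcases eq_or_ne j i.1 with rfl | h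
    · simp [Function.update_self]
    · rw [Function.update_of_ne h]
  · exact ⟨i.1, Finset.mem_univ i.1, by simp [Function.update_self]; omega⟩

/-- Arrival rates of the system with all traffic of classes assigned to server `k` removed. -/
def lamMinus {I K : Type} [DecidableEq K] (Ka : I → Finset K) (lam : I → ℝ) (k : K) :
    I → ℝ :=
  fun i => if k ∈ Ka i then 0 else lam i

open Finset Function

section Shift

variable {I : Type} [DecidableEq I]

lemma update_succ_injective (i : I) :
    Injective (fun y : I → ℕ => update y i (y i + 1)) := by
  intro y z h
  funext j
  have hj := congrFun h j
  rcases eq_or_ne j i with rfl | hne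
  · simpa using hj
  · simpa [update_of_ne hne] using hj

lemma mem_range_update_succ {i : I} {x : I → ℕ} (hx : 0 < x i) :
    x ∈ Set.range (fun y : I → ℕ => update y i (y i + 1)) :=
  ⟨update x i (x i - 1), by simp [Nat.sub_add_cancel hx]⟩

lemma hasSum_ite_update_pred {α : Type*} [AddCommMonoid α] [TopologicalSpace α]
    (i : I) {f : (I → ℕ) → α} {a : α} (hf : HasSum f a) :
    HasSum (fun x => if 0 < x i then f (update x i (x i - 1)) else 0) a := by
  refine (update_succ_injective i).hasSum_iff (fun x hx => if_neg fun h => hx ?_) |>.mp ?_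
  · exact mem_range_update_succ h
  · simpa [comp_def] using hf

lemma sum_update_pred_lt [Fintype I] {x : I → ℕ} {i : I} (hx : 0 < x i) :
    ∑ j, update x i (x i - 1) j < ∑ j, x j := by
  rw [Fintype.sum_eq_add_sum_compl i, Fintype.sum_eq_add_sum_compl i x, update_self]
  refine Nat.add_lt_add_of_lt_of_le (by omega) (sum_le_sum fun j hj => ?_)
  rw [update_of_ne (by simpa using hj)]

lemma prod_pow_eq_mul_prod_pow_update_pred [Fintype I] {R : Type*} [CommMonoid R]
    (lam : I → R) {x : I → ℕ} {i : I} (hx : 0 < x i) :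
    ∏ j, lam j ^ x j = lam i * ∏ j, lam j ^ update x i (x i - 1) j := by
  rw [Fintype.prod_eq_mul_prod_compl i, Fintype.prod_eq_mul_prod_compl i, update_self,
    ← mul_assoc, ← pow_succ', Nat.sub_add_cancel hx]
  congr 1
  exact prod_congr rfl fun j hj => by rw [update_of_ne (by simpa using hj)]

end Shift

def busyServers {I K : Type} [Fintype I] [DecidableEq K] (Ka : I → Finset K) (x : I → ℕ) :
    Finset K :=
  (univ.filter fun i => 0 < x i).biUnion Ka

section BalanceFunction

variable {I K : Type} [Fintype I] [DecidableEq I] [DecidableEq K]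

/-- The weight `Φ(x) λ^x`; its sum over all states is `G(λ)`. -/
noncomputable def stateWeight (μ : K → ℝ) (Ka : I → Finset K) (lam : I → ℝ) (x : I → ℕ) : ℝ :=
  Phi μ Ka x * ∏ i, lam i ^ x i

lemma Phi_zero (μ : K → ℝ) (Ka : I → Finset K) : Phi μ Ka (fun _ => 0) = 1 := by
  rw [Phi, if_pos rfl]

lemma Phi_nonneg {μ : K → ℝ} (hμ : ∀ k, 0 ≤ μ k) (Ka : I → Finset K) (x : I → ℕ) :
    0 ≤ Phi μ Ka x := by
  rw [Phi]
  split
  · exact zero_le_one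
  · exact div_nonneg (sum_nonneg fun i _ => Phi_nonneg hμ Ka _) (sum_nonneg fun k _ => hμ k)
termination_by ∑ i, x i
decreasing_by exact sum_update_pred_lt (mem_filter.1 i.2).2

omit [DecidableEq I] in
lemma busyServers_zero (Ka : I → Finset K) : busyServers Ka (fun _ => 0) = ∅ := by
  simp [busyServers]

omit [DecidableEq I] in
lemma sum_busyServers_pos {μ : K → ℝ} (hμ : ∀ k, 0 < μ k) {Ka : I → Finset K}
    (hKa : ∀ i, (Ka i).Nonempty) {x : I → ℕ} (hx : x ≠ fun _ => 0) :
    0 < ∑ k ∈ busyServers Ka x, μ k := by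
  obtain ⟨i, hi⟩ : ∃ i, 0 < x i := by
    by_contra! h
    exact hx (funext fun i => Nat.eq_zero_of_le_zero (h i))
  obtain ⟨k, hk⟩ := hKa i
  exact sum_pos (fun k _ => hμ k) ⟨k, mem_biUnion.2 ⟨i, by simpa using hi, hk⟩⟩

lemma Phi_mul_sum_busyServers {μ : K → ℝ} (hμ : ∀ k, 0 < μ k) {Ka : I → Finset K}
    (hKa : ∀ i, (Ka i).Nonempty) {x : I → ℕ} (hx : x ≠ fun _ => 0) :
    Phi μ Ka x * ∑ k ∈ busyServers Ka x, μ k =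
      ∑ i ∈ univ.filter (fun i => 0 < x i), Phi μ Ka (update x i (x i - 1)) := by
  rw [Phi, if_neg hx]
  exact (div_mul_cancel₀ _ (sum_busyServers_pos hμ hKa hx).ne').trans
    (sum_attach _ fun i => Phi μ Ka (update x i (x i - 1)))

lemma stateWeight_mul_sum_busyServers {μ : K → ℝ} (hμ : ∀ k, 0 < μ k) {Ka : I → Finset K}
    (hKa : ∀ i, (Ka i).Nonempty) (lam : I → ℝ) (x : I → ℕ) :
    stateWeight μ Ka lam x * ∑ k ∈ busyServers Ka x, μ k =
      ∑ i, if 0 < x i then lam i * stateWeight μ Ka lam (update x i (x i - 1)) else 0 := by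
  rcases eq_or_ne x (fun _ => 0) with rfl | hx
  · simp [busyServers_zero]
  rw [← sum_filter, stateWeight, mul_right_comm, Phi_mul_sum_busyServers hμ hKa hx, sum_mul]
  refine sum_congr rfl fun i hi => ?_
  rw [prod_pow_eq_mul_prod_pow_update_pred lam (mem_filter.1 hi).2, stateWeight]
  ring

lemma stateWeight_lamMinus (μ : K → ℝ) (Ka : I → Finset K) (lam : I → ℝ) (k : K)
    (x : I → ℕ) :
    stateWeight μ Ka (lamMinus Ka lam k) x =
      if k ∈ busyServers Ka x then 0 else stateWeight μ Ka lam x := by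
  unfold stateWeight
  split_ifs with hk
  · obtain ⟨i, hi, hki⟩ := mem_biUnion.1 hk
    rw [prod_eq_zero (mem_univ i) (by simp [lamMinus, hki, (mem_filter.1 hi).2.ne']), mul_zero]
  · congr 1
    refine prod_congr rfl fun i _ => ?_
    by_cases hki : k ∈ Ka i
    · have hxi : x i = 0 := by
        by_contra hxi
        exact hk (mem_biUnion.2 ⟨i, by simpa [Nat.pos_iff_ne_zero] using hxi, hki⟩)
      simp [hxi]
    · simp [lamMinus, hki]

lemma stateWeight_nonneg {μ : K → ℝ} (hμ : ∀ k, 0 ≤ μ k) (Ka : I → Finset K) {lam : I → ℝ}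
    (hlam : ∀ i, 0 ≤ lam i) (x : I → ℕ) : 0 ≤ stateWeight μ Ka lam x :=
  mul_nonneg (Phi_nonneg hμ Ka x) (prod_nonneg fun i _ => pow_nonneg (hlam i) _)

lemma tsum_stateWeight_pos {μ : K → ℝ} (hμ : ∀ k, 0 ≤ μ k) (Ka : I → Finset K)
    {lam : I → ℝ} (hlam : ∀ i, 0 ≤ lam i) (hG : Summable (stateWeight μ Ka lam)) :
    0 < ∑' x, stateWeight μ Ka lam x := by
  have h := hG.le_tsum (fun _ => 0) fun x _ => stateWeight_nonneg hμ Ka hlam x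
  exact zero_lt_one.trans_le (by simpa [stateWeight, Phi_zero] using h)

omit [Fintype I] [DecidableEq I] in
lemma lamMinus_nonneg (Ka : I → Finset K) {lam : I → ℝ} (hlam : ∀ i, 0 ≤ lam i) (k : K)
    (i : I) : 0 ≤ lamMinus Ka lam k i := by
  unfold lamMinus
  split_ifs
  exacts [le_rfl, hlam i]

lemma summable_stateWeight_lamMinus {μ : K → ℝ} (hμ : ∀ k, 0 ≤ μ k) (Ka : I → Finset K)
    {lam : I → ℝ} (hlam : ∀ i, 0 ≤ lam i) (hG : Summable (stateWeight μ Ka lam)) (k : K) :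
    Summable (stateWeight μ Ka (lamMinus Ka lam k)) := by
  refine hG.of_nonneg_of_le (fun x => ?_) fun x => ?_
  · rw [stateWeight_lamMinus]
    split_ifs
    exacts [le_rfl, stateWeight_nonneg hμ Ka hlam x]
  · rw [stateWeight_lamMinus]
    split_ifs
    exacts [stateWeight_nonneg hμ Ka hlam x, le_rfl]

end BalanceFunction

section Recursion

variable {I K : Type} [Fintype I] [DecidableEq I] [Fintype K] [DecidableEq K]
  {μ : K → ℝ} {Ka : I → Finset K} {lam : I → ℝ}

omit [Fintype K] in
lemma hasSum_stateWeight_mul_sum_busyServers (hμ : ∀ k, 0 < μ k) (hKa : ∀ i, (Ka i).Nonempty)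
    (hG : Summable (stateWeight μ Ka lam)) :
    HasSum (fun x => stateWeight μ Ka lam x * ∑ k ∈ busyServers Ka x, μ k)
      ((∑ i, lam i) * ∑' x, stateWeight μ Ka lam x) := by
  simp only [stateWeight_mul_sum_busyServers hμ hKa, sum_mul]
  exact hasSum_sum fun i _ =>
    hasSum_ite_update_pred (f := fun y => lam i * stateWeight μ Ka lam y) i
      (hG.hasSum.mul_left (lam i))

lemma hasSum_stateWeight_mul_sum_idleServers (hμ : ∀ k, 0 ≤ μ k) (hlam : ∀ i, 0 ≤ lam i)
    (hG : Summable (stateWeight μ Ka lam)) :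
    HasSum (fun x => stateWeight μ Ka lam x * ∑ k ∈ (busyServers Ka x)ᶜ, μ k)
      (∑ k, μ k * ∑' x, stateWeight μ Ka (lamMinus Ka lam k) x) := by
  have hidle : ∀ x, stateWeight μ Ka lam x * ∑ k ∈ (busyServers Ka x)ᶜ, μ k =
      ∑ k, μ k * stateWeight μ Ka (lamMinus Ka lam k) x := fun x => by
    rw [mul_sum, ← sum_add_sum_compl (busyServers Ka x),
      sum_eq_zero (s := busyServers Ka x) fun k hk => by
        rw [stateWeight_lamMinus, if_pos hk, mul_zero], zero_add]
    exact sum_congr rfl fun k hk => by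
      rw [stateWeight_lamMinus, if_neg (mem_compl.1 hk), mul_comm]
  simp only [hidle]
  exact hasSum_sum fun k _ =>
    (summable_stateWeight_lamMinus hμ Ka hlam hG k).hasSum.mul_left (μ k)

theorem sum_mul_tsum_stateWeight_lamMinus (hμ : ∀ k, 0 < μ k) (hKa : ∀ i, (Ka i).Nonempty)
    (hlam : ∀ i, 0 ≤ lam i) (hG : Summable (stateWeight μ Ka lam)) :
    ∑ k, μ k * ∑' x, stateWeight μ Ka (lamMinus Ka lam k) x =
      ((∑ k, μ k) - ∑ i, lam i) * ∑' x, stateWeight μ Ka lam x := by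
  have htotal := (hasSum_stateWeight_mul_sum_busyServers hμ hKa hG).add
    (hasSum_stateWeight_mul_sum_idleServers (fun k => (hμ k).le) hlam hG)
  simp_rw [← mul_add, sum_add_sum_compl, mul_comm (stateWeight _ _ _ _)] at htotal
  linarith [htotal.unique (hG.hasSum.mul_left _)]

end Recursion

theorem empty_probability_recursion_general
    {I K : Type} [Fintype I] [DecidableEq I]
    [Fintype K] [DecidableEq K] [Nonempty K]
    (μ : K → ℝ) (hμ : ∀ k, 0 < μ k)
    (Ka : I → Finset K) (hKa : ∀ i, (Ka i).Nonempty)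
    (lam : I → ℝ) (hlam : ∀ i, 0 ≤ lam i)
    (hG : Summable (fun x : I → ℕ => Phi μ Ka x * ∏ i, lam i ^ x i)) :
    (∀ k : K, Summable (fun x : I → ℕ => Phi μ Ka x * ∏ i, lamMinus Ka lam k i ^ x i)) ∧
    (∑ k, μ k * ∑' x : I → ℕ, Phi μ Ka x * ∏ i, lamMinus Ka lam k i ^ x i) =
      ((∑ k, μ k) - ∑ i, lam i) * ∑' x : I → ℕ, Phi μ Ka x * ∏ i, lam i ^ x i ∧
    (∑' x : I → ℕ, Phi μ Ka x * ∏ i, lam i ^ x i)⁻¹ =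
      ((∑ k, μ k) - ∑ i, lam i) /
        ∑ k, μ k / (∑' x : I → ℕ, Phi μ Ka x * ∏ i, lamMinus Ka lam k i ^ x i)⁻¹ := by
  have hμ₀ : ∀ k, 0 ≤ μ k := fun k => (hμ k).le
  have hminus := summable_stateWeight_lamMinus hμ₀ Ka hlam hG
  have hrec := sum_mul_tsum_stateWeight_lamMinus hμ hKa hlam hG
  refine ⟨hminus, hrec, ?_⟩
  have hGpos := tsum_stateWeight_pos hμ₀ Ka hlam hG
  have hgap : (∑ k, μ k) - ∑ i, lam i ≠ 0 := by
    intro h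
    rw [h, zero_mul] at hrec
    refine (sum_pos (fun k _ => ?_) univ_nonempty).ne' hrec
    exact mul_pos (hμ k) (tsum_stateWeight_pos hμ₀ Ka (lamMinus_nonneg Ka hlam k) (hminus k))
  change (∑' x, stateWeight μ Ka lam x)⁻¹ =
    _ / ∑ k, μ k / (∑' x, stateWeight μ Ka (lamMinus Ka lam k) x)⁻¹
  simp only [div_inv_eq_mul]
  rw [hrec]
  field_simp [hgap, hGpos.ne']

/-- **Theorem 1 of the paper.** If `G(λ) < ∞` then
`ψ = (M(K) − Λ(I)) / (∑_k μ_k / ψ_{|−k})`; equivalently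
`∑_k μ_k G(λ_{|−k}) = (M(K) − Λ(I)) G(λ)` — and each `G(λ_{|−k})` is finite. -/
theorem empty_probability_recursion
    {I K : Type} [Fintype I] [DecidableEq I] [Nonempty I]
    [Fintype K] [DecidableEq K] [Nonempty K]
    (μ : K → ℝ) (hμ : ∀ k, 0 < μ k)
    (Ka : I → Finset K) (hKa : ∀ i, (Ka i).Nonempty) (hcov : ∀ k, ∃ i, k ∈ Ka i)
    (lam : I → ℝ) (hlam : ∀ i, 0 ≤ lam i)
    (hG : Summable (fun x : I → ℕ => Phi μ Ka x * ∏ i, lam i ^ x i)) :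
    (∀ k : K, Summable (fun x : I → ℕ => Phi μ Ka x * ∏ i, lamMinus Ka lam k i ^ x i)) ∧
    (∑ k, μ k * ∑' x : I → ℕ, Phi μ Ka x * ∏ i, lamMinus Ka lam k i ^ x i) =
      ((∑ k, μ k) - ∑ i, lam i) * ∑' x : I → ℕ, Phi μ Ka x * ∏ i, lam i ^ x i ∧
    (∑' x : I → ℕ, Phi μ Ka x * ∏ i, lam i ^ x i)⁻¹ =
      ((∑ k, μ k) - ∑ i, lam i) /
        ∑ k, μ k / (∑' x : I → ℕ, Phi μ Ka x * ∏ i, lamMinus Ka lam k i ^ x i)⁻¹ :=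
  empty_probability_recursion_general μ hμ Ka hKa lam hlam hG
end

section
/- In the homogeneous randomized pool, suppose G(λ) < ∞. Then the probability that the system is empty is ψ = ∏_{ℓ=d}^{K} ( 1 − ρ_{|ℓ} ), where ρ_{|ℓ} = ρ · C(ℓ−1, d−1) / C(K−1, d−1). (In particular G(λ) < ∞ entails ρ < 1.) -/
open scoped BigOperators

/-- The normalization series `G(λ) = ∑_{x∈ℕ^I} Φ(x) λ^x` (as a real tsum). -/
noncomputable def Gf {I K : Type} [Fintype I] [DecidableEq I] [DecidableEq K]
    (μ : K → ℝ) (Ka : I → Finset K) (lam : I → ℝ) : ℝ :=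
  ∑' x : I → ℕ, Phi μ Ka x * ∏ i, lam i ^ x i


/-!
For a set `A` of servers let `G(A)` be the part of the series `G` over the states whose busy
servers all lie in `A`. Multiply the balance equation `M(busy x) Φ(x) = ∑_{i : x_i > 0} Φ(x - e_i)`
by `λ^x` and sum over these states. The right side becomes `(∑_{i : 𝒦_i ⊆ A} λ_i) G(A)`, since
`x ↦ x + e_i` maps those states onto those with `x_i > 0`; on the left, writing
`M(busy x) = M(A) - ∑_{k ∈ A \ busy x} μ_k` gives `M(A) G(A) - ∑_{k ∈ A} μ_k G(A \ {k})`. So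
`(M(A) - λ(A)) G(A) = ∑_{k ∈ A} μ_k G(A \ {k})`, and `G ≥ 1` forces `λ(A) < M(A)`.

In the homogeneous pool `M(A) = μ |A|` and `λ(A) = ν C(|A|, d)` with `ν = Kλ / C(K, d)`, so by
induction `G(A)⁻¹ = ∏_{ℓ=1}^{|A|} (1 - ν C(ℓ, d) / (μ ℓ))`. The factors with `ℓ < d` are `1`, and
`ℓ C(ℓ-1, d-1) = d C(ℓ, d)` turns `ν C(ℓ, d) / (μ ℓ)` into `ρ_{|ℓ}`.
-/

open Finset

theorem cast_choose_div_self {n k : ℕ} (hn : 1 ≤ n) (hk : 1 ≤ k) :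
    (n.choose k : ℝ) / n = ((n - 1).choose (k - 1) : ℝ) / k := by
  have h := Nat.add_one_mul_choose_eq (n - 1) (k - 1)
  rw [Nat.sub_add_cancel hn, Nat.sub_add_cancel hk] at h
  rw [div_eq_div_iff (by positivity) (by positivity), mul_comm _ (n : ℝ)]
  exact_mod_cast h.symm

namespace BalancedFairness

theorem update_sub_one_eq_sub_single {I : Type} [DecidableEq I] (x : I → ℕ) (i : I) :
    Function.update x i (x i - 1) = x - Pi.single i 1 := by
  ext j
  rcases eq_or_ne j i with rfl | h <;> simp [*]

theorem prod_pow_add_single {I : Type} [Fintype I] [DecidableEq I] (lam : I → ℝ) (y : I → ℕ)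
    (i : I) : ∏ j, lam j ^ (y + Pi.single i 1 : I → ℕ) j = lam i * ∏ j, lam j ^ y j := by
  have h_single : ∏ j, lam j ^ (Pi.single i 1 : I → ℕ) j = lam i := by
    rw [Fintype.prod_eq_single i fun j hj => by simp [hj]]
    simp
  simp only [Pi.add_apply, pow_add, prod_mul_distrib, h_single, mul_comm]

section Pool

variable {I K : Type} [Fintype I] [DecidableEq K]

def activeServers (Ka : I → Finset K) (x : I → ℕ) : Finset K :=
  (univ.filter fun i => 0 < x i).biUnion Ka

theorem activeServers_nonempty {Ka : I → Finset K} (hKa : ∀ i, (Ka i).Nonempty) {x : I → ℕ} :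
    (activeServers Ka x).Nonempty ↔ x ≠ 0 := by
  simp [activeServers, biUnion_nonempty, hKa, funext_iff, Nat.pos_iff_ne_zero]

variable [DecidableEq I]

noncomputable def weight (μ : K → ℝ) (Ka : I → Finset K) (lam : I → ℝ) (x : I → ℕ) : ℝ :=
  Phi μ Ka x * ∏ i, lam i ^ x i

noncomputable def GfOn (μ : K → ℝ) (Ka : I → Finset K) (lam : I → ℝ) (A : Finset K) : ℝ :=
  ∑' x, {x | activeServers Ka x ⊆ A}.indicator (weight μ Ka lam) x

theorem Phi_zero (μ : K → ℝ) (Ka : I → Finset K) : Phi μ Ka 0 = 1 := by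
  rw [Phi, if_pos Pi.zero_def]

theorem Phi_eq_sum_div (μ : K → ℝ) (Ka : I → Finset K) {x : I → ℕ} (hx : x ≠ 0) :
    Phi μ Ka x = (∑ i with 0 < x i, Phi μ Ka (x - Pi.single i 1)) /
      ∑ k ∈ activeServers Ka x, μ k := by
  rw [Phi, if_neg (show ¬x = fun _ => 0 from hx),
    sum_attach _ fun i => Phi μ Ka (Function.update x i (x i - 1))]
  simp only [update_sub_one_eq_sub_single]
  rfl

theorem Phi_nonneg {μ : K → ℝ} (hμ : ∀ k, 0 ≤ μ k) (Ka : I → Finset K) (x : I → ℕ) :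
    0 ≤ Phi μ Ka x := by
  induction x using Phi.induct with
  | case1 => rw [← Pi.zero_def, Phi_zero]; exact zero_le_one
  | case2 x hx ih =>
    rw [Phi, if_neg hx]
    exact div_nonneg (sum_nonneg fun i _ => ih i) (sum_nonneg fun k _ => hμ k)

theorem activeServers_add_single (Ka : I → Finset K) (y : I → ℕ) (i : I) :
    activeServers Ka (y + Pi.single i 1) = Ka i ∪ activeServers Ka y := by
  rw [activeServers, activeServers, ← biUnion_insert]
  congr 1
  ext j
  rcases eq_or_ne j i with rfl | h <;> simp [*]

section Recursion

variable {μ : K → ℝ} {Ka : I → Finset K} {lam : I → ℝ}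

theorem weight_zero : weight μ Ka lam 0 = 1 := by
  simp [weight, Phi_zero]

theorem weight_nonneg (hμ : ∀ k, 0 ≤ μ k) (hlam : ∀ i, 0 ≤ lam i) (x : I → ℕ) :
    0 ≤ weight μ Ka lam x :=
  mul_nonneg (Phi_nonneg hμ Ka x) (prod_nonneg fun i _ => pow_nonneg (hlam i) _)

noncomputable def arrivalFlow (μ : K → ℝ) (Ka : I → Finset K) (lam : I → ℝ) (i : I)
    (x : I → ℕ) : ℝ :=
  if 0 < x i then Phi μ Ka (x - Pi.single i 1) * ∏ j, lam j ^ x j else 0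

theorem arrivalFlow_add_single (i : I) (y : I → ℕ) :
    arrivalFlow μ Ka lam i (y + Pi.single i 1) = lam i * weight μ Ka lam y := by
  rw [arrivalFlow, if_pos (by simp), add_tsub_cancel_right, prod_pow_add_single, weight]
  ring

theorem capacity_mul_weight_eq_sum_arrivalFlow (hμ : ∀ k, 0 < μ k) (hKa : ∀ i, (Ka i).Nonempty)
    (x : I → ℕ) :
    (∑ k ∈ activeServers Ka x, μ k) * weight μ Ka lam x = ∑ i, arrivalFlow μ Ka lam i x := by
  rcases eq_or_ne x 0 with rfl | hx
  · simp [activeServers, arrivalFlow]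
  have hM : ∑ k ∈ activeServers Ka x, μ k ≠ 0 :=
    (sum_pos (fun k _ => hμ k) ((activeServers_nonempty hKa).2 hx)).ne'
  rw [weight, Phi_eq_sum_div μ Ka hx, ← mul_assoc, mul_div_cancel₀ _ hM, sum_mul, sum_filter]
  rfl

theorem hasSum_indicator_arrivalFlow (hw : Summable (weight μ Ka lam)) (A : Finset K) (i : I) :
    HasSum ({x | activeServers Ka x ⊆ A}.indicator (arrivalFlow μ Ka lam i))
      ((if Ka i ⊆ A then lam i else 0) * GfOn μ Ka lam A) := by
  rw [← (add_left_injective (Pi.single i 1 : I → ℕ)).hasSum_iff]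
  · have h_shift : {x | activeServers Ka x ⊆ A}.indicator (arrivalFlow μ Ka lam i) ∘
        (· + Pi.single i 1) = fun y => (if Ka i ⊆ A then lam i else 0) *
          {x | activeServers Ka x ⊆ A}.indicator (weight μ Ka lam) y := by
      ext y
      simp only [Function.comp_apply, Set.indicator_apply, Set.mem_ofPred_eq,
        activeServers_add_single, union_subset_iff, arrivalFlow_add_single]
      split_ifs <;> simp_all
    rw [h_shift]
    exact (hw.indicator _).hasSum.mul_left _
  · intro x hx
    rw [Set.indicator_apply_eq_zero]
    intro _
    refine if_neg fun hpos => hx ⟨x - Pi.single i 1, ?_⟩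
    ext j
    rcases eq_or_ne j i with rfl | h <;> simp [*]
    omega

theorem indicator_capacity_mul_weight (A : Finset K) (x : I → ℕ) :
    {x | activeServers Ka x ⊆ A}.indicator
        (fun x => (∑ k ∈ activeServers Ka x, μ k) * weight μ Ka lam x) x =
      (∑ k ∈ A, μ k) * {x | activeServers Ka x ⊆ A}.indicator (weight μ Ka lam) x -
        ∑ k ∈ A, μ k * {x | activeServers Ka x ⊆ A.erase k}.indicator (weight μ Ka lam) x := by
  by_cases hA : activeServers Ka x ⊆ A
  · have h_idle : ∑ k ∈ A, μ k * {x | activeServers Ka x ⊆ A.erase k}.indicator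
        (weight μ Ka lam) x = (∑ k ∈ A \ activeServers Ka x, μ k) * weight μ Ka lam x := by
      rw [sum_mul, sdiff_eq_filter, sum_filter]
      refine sum_congr rfl fun k _ => ?_
      simp [Set.indicator_apply, subset_erase, hA]
    have hx : x ∈ {x | activeServers Ka x ⊆ A} := hA
    rw [h_idle, ← sum_sdiff hA, Set.indicator_of_mem hx, Set.indicator_of_mem hx]
    ring
  · simp [hA, subset_erase]

theorem capacity_sub_load_mul_GfOn (hμ : ∀ k, 0 < μ k) (hKa : ∀ i, (Ka i).Nonempty)
    (hw : Summable (weight μ Ka lam)) (A : Finset K) :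
    (∑ k ∈ A, μ k - ∑ i with Ka i ⊆ A, lam i) * GfOn μ Ka lam A =
      ∑ k ∈ A, μ k * GfOn μ Ka lam (A.erase k) := by
  set outflow := {x | activeServers Ka x ⊆ A}.indicator
    fun x => (∑ k ∈ activeServers Ka x, μ k) * weight μ Ka lam x
  have h_by_arrivals : HasSum outflow ((∑ i with Ka i ⊆ A, lam i) * GfOn μ Ka lam A) := by
    have h_balance : outflow = fun x =>
        ∑ i, {x | activeServers Ka x ⊆ A}.indicator (arrivalFlow μ Ka lam i) x := by
      ext x
      simp only [outflow, Set.indicator_apply, capacity_mul_weight_eq_sum_arrivalFlow hμ hKa]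
      split_ifs <;> simp
    rw [h_balance, sum_filter, sum_mul]
    exact hasSum_sum fun i _ => hasSum_indicator_arrivalFlow hw A i
  have h_by_capacity : HasSum outflow
      ((∑ k ∈ A, μ k) * GfOn μ Ka lam A - ∑ k ∈ A, μ k * GfOn μ Ka lam (A.erase k)) := by
    rw [show outflow = _ from funext (indicator_capacity_mul_weight A)]
    exact ((hw.indicator _).hasSum.mul_left _).sub
      (hasSum_sum fun k _ => (hw.indicator _).hasSum.mul_left _)
  linear_combination h_by_capacity.unique h_by_arrivals

theorem GfOn_univ [Fintype K] : GfOn μ Ka lam univ = Gf μ Ka lam := by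
  simp only [GfOn, subset_univ, Set.ofPred_true, Set.indicator_univ]
  rfl

theorem GfOn_empty (hKa : ∀ i, (Ka i).Nonempty) : GfOn μ Ka lam ∅ = 1 := by
  have h_zero : (0 : I → ℕ) ∈ {x | activeServers Ka x ⊆ ∅} := by simp [activeServers]
  rw [GfOn, tsum_eq_single 0 fun x hx => Set.indicator_of_notMem (fun h =>
      ((activeServers_nonempty hKa).2 hx).ne_empty (subset_empty.1 h)) _,
    Set.indicator_of_mem h_zero, weight_zero]

theorem one_le_GfOn (hμ : ∀ k, 0 ≤ μ k) (hlam : ∀ i, 0 ≤ lam i)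
    (hw : Summable (weight μ Ka lam)) (A : Finset K) : 1 ≤ GfOn μ Ka lam A := by
  have h_zero : (0 : I → ℕ) ∈ {x | activeServers Ka x ⊆ A} := by simp [activeServers]
  have := (hw.indicator {x | activeServers Ka x ⊆ A}).le_tsum 0 fun x _ =>
    Set.indicator_nonneg (fun x _ => weight_nonneg hμ hlam x) x
  rwa [Set.indicator_of_mem h_zero, weight_zero] at this

theorem load_lt_capacity (hμ : ∀ k, 0 < μ k) (hKa : ∀ i, (Ka i).Nonempty)
    (hlam : ∀ i, 0 ≤ lam i) (hw : Summable (weight μ Ka lam)) {A : Finset K}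
    (hA : A.Nonempty) : ∑ i with Ka i ⊆ A, lam i < ∑ k ∈ A, μ k := by
  have hG : ∀ B, 0 < GfOn μ Ka lam B := fun B =>
    zero_lt_one.trans_le (one_le_GfOn (fun k => (hμ k).le) hlam hw B)
  have h_pos : 0 < ∑ k ∈ A, μ k * GfOn μ Ka lam (A.erase k) :=
    sum_pos (fun k _ => mul_pos (hμ k) (hG _)) hA
  rw [← capacity_sub_load_mul_GfOn hμ hKa hw A] at h_pos
  exact sub_pos.1 (pos_of_mul_pos_left h_pos (hG A).le)

end Recursion

end Pool

section Homogeneous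

abbrev DSubset (K d : ℕ) := {S : Finset (Fin K) // S.card = d}

variable {K d : ℕ} {μ ν : ℝ}

local notation "𝒢" => GfOn (fun _ : Fin K => μ) (Subtype.val : DSubset K d → _) (fun _ => ν)

theorem DSubset.nonempty (hd : 1 ≤ d) (S : DSubset K d) : S.1.Nonempty :=
  card_pos.1 (hd.trans_eq S.2.symm)

theorem card_dSubset_subset (A : Finset (Fin K)) :
    #{S : DSubset K d | S.1 ⊆ A} = (#A).choose d := by
  rw [← card_powersetCard]
  refine card_bij (fun S _ => S.1) (fun S hS => ?_) (fun S _ T _ h => Subtype.ext h) fun t ht => ?_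
  · exact mem_powersetCard.2 ⟨(mem_filter.1 hS).2, S.2⟩
  · obtain ⟨htA, ht⟩ := mem_powersetCard.1 ht
    exact ⟨⟨t, ht⟩, mem_filter.2 ⟨mem_univ _, htA⟩, rfl⟩

theorem capacity_sub_load_mul_GfOn_homogeneous (hd : 1 ≤ d) (hμ : 0 < μ)
    (hw : Summable (weight (fun _ : Fin K => μ) (fun S : DSubset K d => S.1) fun _ => ν))
    (A : Finset (Fin K)) :
    (μ * #A - ν * (#A).choose d) * 𝒢 A = μ * ∑ k ∈ A, 𝒢 (A.erase k) := by
  have h := capacity_sub_load_mul_GfOn (fun _ => hμ) (DSubset.nonempty hd) hw A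
  rw [sum_const, sum_const, card_dSubset_subset, nsmul_eq_mul, nsmul_eq_mul, ← mul_sum] at h
  linear_combination h

theorem inv_GfOn_homogeneous (hd : 1 ≤ d) (hμ : 0 < μ) (hν : 0 ≤ ν)
    (hw : Summable (weight (fun _ : Fin K => μ) (fun S : DSubset K d => S.1) fun _ => ν))
    (A : Finset (Fin K)) :
    (𝒢 A)⁻¹ = ∏ ℓ ∈ Icc 1 #A, (1 - ν * ℓ.choose d / (μ * ℓ)) := by
  suffices h : ∀ n, ∀ A : Finset (Fin K), #A = n →
      (𝒢 A)⁻¹ = ∏ ℓ ∈ Icc 1 n, (1 - ν * ℓ.choose d / (μ * ℓ)) from h _ A rfl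
  intro n
  induction n with
  | zero =>
    intro A hA
    rw [card_eq_zero.1 hA, GfOn_empty (DSubset.nonempty hd)]
    simp
  | succ n ih =>
    intro A hA
    have hG : ∀ B, 𝒢 B ≠ 0 := fun B =>
      (zero_lt_one.trans_le (one_le_GfOn (fun _ => hμ.le) (fun _ => hν) hw B)).ne'
    obtain ⟨k₀, hk₀⟩ := (card_pos (s := A)).1 (by omega)
    set P := ∏ ℓ ∈ Icc 1 n, (1 - ν * ℓ.choose d / (μ * ℓ))
    have h_erase : ∀ k ∈ A, 𝒢 (A.erase k) = P⁻¹ :=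
      fun k hk => by rw [← ih _ (by rw [card_erase_of_mem hk, hA]; rfl), inv_inv]
    have hP : P ≠ 0 := by simpa [h_erase k₀ hk₀] using hG (A.erase k₀)
    have h_rec := capacity_sub_load_mul_GfOn_homogeneous hd hμ hw A
    rw [sum_congr rfl h_erase, sum_const, hA, nsmul_eq_mul] at h_rec
    rw [prod_Icc_succ_top (by omega)]
    refine (eq_inv_of_mul_eq_one_left ?_).symm
    have hm : μ * (n + 1 : ℕ) ≠ 0 := by positivity
    calc P * (1 - ν * (n + 1).choose d / (μ * (n + 1 : ℕ))) * 𝒢 A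
        = P * ((μ * (n + 1 : ℕ) - ν * (n + 1).choose d) * 𝒢 A) / (μ * (n + 1 : ℕ)) := by
          field_simp
      _ = 1 := by
          rw [h_rec]
          field_simp

theorem load_lt_capacity_homogeneous (hd : 1 ≤ d) (hμ : 0 < μ) (hν : 0 ≤ ν)
    (hw : Summable (weight (fun _ : Fin K => μ) (fun S : DSubset K d => S.1) fun _ => ν))
    {A : Finset (Fin K)} (hA : A.Nonempty) : ν * (#A).choose d < μ * #A := by
  have h := load_lt_capacity (fun _ => hμ) (DSubset.nonempty hd) (fun _ => hν) hw hA
  rwa [sum_const, sum_const, card_dSubset_subset, nsmul_eq_mul, nsmul_eq_mul, mul_comm,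
    mul_comm (#A : ℝ)] at h

theorem homogeneous_level_load_eq (hd : 1 ≤ d) (hdK : d ≤ K) {ℓ : ℕ} (hℓ : 1 ≤ ℓ) (lam : ℝ) :
    K * lam / K.choose d * ℓ.choose d / (μ * ℓ) =
      lam / μ * (ℓ - 1).choose (d - 1) / (K - 1).choose (d - 1) := by
  have hK : 1 ≤ K := hd.trans hdK
  have h_choose : ((K - 1).choose (d - 1) : ℝ) ≠ 0 := by
    exact_mod_cast (Nat.choose_pos (by omega)).ne'
  calc (K * lam / K.choose d * ℓ.choose d / (μ * ℓ) : ℝ)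
      = lam / μ * ((ℓ.choose d : ℝ) / ℓ) / ((K.choose d : ℝ) / K) := by
        field_simp
    _ = lam / μ * (((ℓ - 1).choose (d - 1) : ℝ) / d) / (((K - 1).choose (d - 1) : ℝ) / d) := by
        rw [cast_choose_div_self hℓ hd, cast_choose_div_self hK hd]
    _ = lam / μ * (ℓ - 1).choose (d - 1) / (K - 1).choose (d - 1) := by
        field_simp

end Homogeneous

end BalancedFairness

open BalancedFairness

/-- In the homogeneous randomized pool (`K` servers of rate `μ`, classes
given by the `d`-element subsets of servers, each with arrival rate `Kλ/C(K,d)`), if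
`G(λ) < ∞` then `ψ = ∏_{ℓ=d}^K (1 − ρ_{|ℓ})` with
`ρ_{|ℓ} = ρ C(ℓ−1,d−1)/C(K−1,d−1)` and `ρ = λ/μ`; in particular `ρ < 1`. -/
theorem homogeneous_randomized_pool_empty_probability
    (K d : ℕ) (hd1 : 1 ≤ d) (hdK : d ≤ K)
    (lam μ : ℝ) (hlam : 0 < lam) (hμ : 0 < μ)
    (hG : Summable (fun x : {S : Finset (Fin K) // S.card = d} → ℕ =>
      Phi (fun _ : Fin K => μ) (fun S => S.1) x *
        ∏ S : {S : Finset (Fin K) // S.card = d},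
          ((K : ℝ) * lam / (K.choose d)) ^ x S)) :
    (Gf (fun _ : Fin K => μ) (fun S : {S : Finset (Fin K) // S.card = d} => S.1)
        (fun _ => (K : ℝ) * lam / (K.choose d)))⁻¹ =
      (∏ ℓ ∈ Finset.Icc d K,
        (1 - lam / μ * ((ℓ - 1).choose (d - 1) : ℝ) / (((K - 1).choose (d - 1) : ℕ) : ℝ))) ∧
    lam / μ < 1 := by
  have hK : 1 ≤ K := hd1.trans hdK
  have h_choose : (0 : ℝ) < K.choose d := by exact_mod_cast Nat.choose_pos hdK
  have hν : (0 : ℝ) ≤ K * lam / K.choose d := by positivity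
  constructor
  · rw [← GfOn_univ (K := Fin K), inv_GfOn_homogeneous hd1 hμ hν hG, card_univ, Fintype.card_fin,
      prod_subset (Icc_subset_Icc hd1 le_rfl) fun ℓ hℓ hℓd => ?_]
    · refine prod_congr rfl fun ℓ hℓ => ?_
      rw [homogeneous_level_load_eq hd1 hdK (mem_Icc.1 hℓ).1]
    · have : ℓ - 1 < d - 1 := by simp only [mem_Icc] at hℓ hℓd; omega
      simp [Nat.choose_eq_zero_of_lt this]
  · have h := load_lt_capacity_homogeneous hd1 hμ hν hG (univ_nonempty_iff.2 ⟨⟨0, hK⟩⟩)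
    rw [card_univ, Fintype.card_fin, div_mul_cancel₀ _ h_choose.ne'] at h
    rw [div_lt_one hμ]
    nlinarith
end
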